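/- Consider the problem of minimizing f = x over {x ∈ ℝ : x³ ≥ 0} (n = 1, s = 0, t = 1, h_1 = x³). Its global minimum is 0, attained at x = 0. Nevertheless, the KKT ideal I_KKT = ⟨1 − 3νx², νx³⟩ ⊆ ℝ[x, ν] contains the constant polynomial 1 (equivalently, the KKT system has no complex solutions, V_KKT = ∅); consequently, for every γ ∈ ℝ one has x − γ ∈ P_KKT, so the SOS relaxation over the preorder cone is unbounded above. -/
import Mathlib


open MvPolynomial

noncomputable section

/-- The polynomial ring `ℝ[x, ν]` in two variables: `X 0 = x`, `X 1 = ν`. -/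
abbrev QPoly := MvPolynomial (Fin 2) ℝ

/-- A real polynomial is SOS if it is a finite sum of squares of real polynomials. -/
def IsSOS (p : QPoly) : Prop :=
  ∃ (m : ℕ) (q : Fin m → QPoly), p = ∑ i, (q i) ^ 2

/-- The KKT ideal `I_KKT = ⟨1 − 3νx², νx³⟩ ⊆ ℝ[x, ν]` of the problem
`min x s.t. x³ ≥ 0`. -/
def IKKT : Ideal QPoly :=
  Ideal.span {1 - 3 * X 1 * X 0 ^ 2, X 1 * X 0 ^ 3}

/-- The preorder cone `P_KKT = {σ_0 + σ_1 x³ : σ_0, σ_1 SOS} + I_KKT`. -/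
def PKKT : Set QPoly :=
  {p | ∃ σ0 σ1 : QPoly, IsSOS σ0 ∧ IsSOS σ1 ∧
    ∃ q ∈ IKKT, p = σ0 + σ1 * X 0 ^ 3 + q}

lemma one_mem_IKKT : (1 : QPoly) ∈ IKKT := by
  rw [IKKT, Ideal.mem_span_pair]
  exact ⟨1 + 3 * X 1 * X 0 ^ 2, 9 * X 1 * X 0, by ring⟩

lemma zero_isSOS : IsSOS 0 := ⟨0, ![], by simp⟩

/-- The problem `min x s.t. x³ ≥ 0` has global minimum `0`, attained
at `x = 0`; nevertheless the KKT ideal `I_KKT = ⟨1 − 3νx², νx³⟩` contains `1`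
(equivalently the complex KKT variety is empty), and consequently `x − γ ∈ P_KKT` for
every `γ ∈ ℝ`, so the SOS relaxation over the preorder cone is unbounded above. -/
theorem stmt12 :
    IsLeast {y : ℝ | ∃ x : ℝ, 0 ≤ x ^ 3 ∧ y = x} 0 ∧
    (1 : QPoly) ∈ IKKT ∧
    {z : Fin 2 → ℂ | ∀ p ∈ IKKT, MvPolynomial.aeval z p = 0} = ∅ ∧
    ∀ γ : ℝ, X 0 - C γ ∈ PKKT := by
  refine ⟨⟨⟨0, by norm_num⟩, ?_⟩, one_mem_IKKT, ?_, ?_⟩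
  · rintro y ⟨x, hx, hy⟩
    subst hy
    exact (Odd.pow_nonneg_iff (by decide : Odd 3)).mp hx
  · ext z
    simp only [Set.mem_setOf_eq, Set.mem_empty_iff_false, iff_false, not_forall]
    exact ⟨1, one_mem_IKKT, by simp⟩
  · intro γ
    refine ⟨0, 0, zero_isSOS, zero_isSOS, X 0 - C γ, ?_, by ring⟩
    have := Ideal.mul_mem_left IKKT (X 0 - C γ) one_mem_IKKT
    simpa using this
end
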